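/- Let g : ℝ → ℝ be a trigonometric polynomial of degree at most d (i.e., g(θ) = Σ_{k=0}^d a_k cos(kθ) + b_k sin(kθ)) with |g(θ)| ≤ 1 for all θ. Then the function f = g² satisfies |f'(θ)| ≤ d for all θ ∈ ℝ. -/

import Mathlib

/-!
`g² - 1/2` is a trigonometric polynomial of degree `2d` bounded by `1/2`, so the claim is
Bernstein's inequality `‖T'‖∞ ≤ N ‖T‖∞` for trigonometric polynomials `T` of degree `N`.
Bernstein's inequality follows from M. Riesz's interpolation formula
`T'(x) = (4N)⁻¹ ∑_{j < 2N} (-1)ʲ T(x + tⱼ) / sin² (tⱼ / 2)`, `tⱼ = (2j + 1)π / (2N)`,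
whose weights `1 / sin² (tⱼ / 2)` are positive with total `4N²`. Both sides of the formula are
linear in `T`, so it suffices to check it on `cos (k x - φ)`, `k ≤ N`, where it reduces to
`∑ (-1)ʲ cos (k tⱼ) / sin² (tⱼ / 2) = 0` (by the symmetry `tⱼ ↦ 2π - tⱼ`) and
`∑ (-1)ʲ sin (k tⱼ) / sin² (tⱼ / 2) = 4Nk` (by induction on `k`, via the Dirichlet kernel).
-/

open Real Finset

noncomputable def rieszNode (N j : ℕ) : ℝ := (2 * j + 1) * π / (2 * N)

lemma cast_pos_of_lt_two_mul {N j : ℕ} (hj : j < 2 * N) : (0 : ℝ) < N := by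
  exact_mod_cast (show 0 < N by omega)

lemma sin_half_rieszNode_pos {N j : ℕ} (hj : j < 2 * N) : 0 < sin (rieszNode N j / 2) := by
  have hN := cast_pos_of_lt_two_mul hj
  have hj' : (j : ℝ) + 1 ≤ 2 * N := by exact_mod_cast hj
  apply sin_pos_of_pos_of_lt_pi
  · unfold rieszNode; positivity
  · rw [rieszNode, div_div, div_lt_iff₀ (by positivity)]
    nlinarith [pi_pos]

lemma sin_mul_rieszNode_self {N j : ℕ} (hj : j < 2 * N) : sin (N * rieszNode N j) = (-1) ^ j := by
  have hN := (cast_pos_of_lt_two_mul hj).ne'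
  have h : N * rieszNode N j = j * π + π / 2 := by rw [rieszNode]; field_simp
  rw [h, sin_add_pi_div_two, cos_nat_mul_pi]

lemma sum_range_cos_mul_rieszNode {N l : ℕ} (hl0 : 0 < l) (hl : l < 2 * N) :
    ∑ j ∈ range (2 * N), cos (l * rieszNode N j) = 0 := by
  have hN := cast_pos_of_lt_two_mul hl
  set q : ℝ := l * π / (2 * N)
  have hq : sin q ≠ 0 := by
    have hl' : (l : ℝ) < 2 * N := by exact_mod_cast hl
    refine (sin_pos_of_pos_of_lt_pi (by positivity) ?_).ne'
    rw [div_lt_iff₀ (by positivity)]; nlinarith [pi_pos]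
  -- `2 sin q cos (l tⱼ)` telescopes, since `l tⱼ ± q = (2j + 1 ± 1) q`
  have telescope : ∀ j,
      2 * sin q * cos (l * rieszNode N j) = sin ((j + 1 : ℕ) * (2 * q)) - sin (j * (2 * q)) := by
    intro j
    rw [sin_sub_sin]
    congr 2
    · congr 1; push_cast; ring
    · simp only [q, rieszNode]; push_cast; field_simp; ring
  have scaled : 2 * sin q * ∑ j ∈ range (2 * N), cos (l * rieszNode N j) = 0 := by
    rw [mul_sum, sum_congr rfl fun j _ => telescope j,
      sum_range_sub (fun j : ℕ => sin (j * (2 * q)))]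
    have endpoint : ((2 * N : ℕ) : ℝ) * (2 * q) = (2 * l : ℕ) * π := by
      simp only [q]; push_cast; field_simp
    rw [endpoint, sin_nat_mul_pi]; simp
  simpa [hq] using scaled

lemma sin_add_half_mul_eq_sin_half_mul_sum_cos (r : ℕ) (x : ℝ) :
    sin ((r + 1 / 2) * x) = sin (x / 2) * (1 + 2 * ∑ l ∈ range r, cos ((l + 1) * x)) := by
  induction r with
  | zero => ring_nf
  | succ r ih =>
    have step : sin ((r + 1 + 1 / 2) * x) - sin ((r + 1 / 2) * x)
        = 2 * sin (x / 2) * cos ((r + 1) * x) := by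
      rw [sin_sub_sin]; ring_nf
    rw [sum_range_succ, Nat.cast_succ]
    linear_combination step + ih

lemma sum_range_sin_add_half_mul_rieszNode_div {N r : ℕ} (hr : r < 2 * N) :
    ∑ j ∈ range (2 * N), sin ((r + 1 / 2) * rieszNode N j) / sin (rieszNode N j / 2) = 2 * N := by
  have expand : ∀ j ∈ range (2 * N),
      sin ((r + 1 / 2) * rieszNode N j) / sin (rieszNode N j / 2)
        = 1 + 2 * ∑ l ∈ range r, cos ((l + 1) * rieszNode N j) := by
    intro j hj
    rw [sin_add_half_mul_eq_sin_half_mul_sum_cos,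
      mul_div_cancel_left₀ _ (sin_half_rieszNode_pos (mem_range.1 hj)).ne']
  have vanish : ∀ l ∈ range r, ∑ j ∈ range (2 * N), cos ((l + 1) * rieszNode N j) = 0 := by
    intro l hl
    exact_mod_cast sum_range_cos_mul_rieszNode l.succ_pos (by simp at hl; omega)
  rw [sum_congr rfl expand, sum_add_distrib, ← mul_sum, sum_comm, sum_eq_zero vanish]
  simp

lemma sum_range_neg_one_pow_mul_cos_add_half_mul_rieszNode_div {N m : ℕ} (hm : m < N) :
    ∑ j ∈ range (2 * N), (-1) ^ j * cos ((m + 1 / 2) * rieszNode N j) / sin (rieszNode N j / 2)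
      = 2 * N := by
  -- `(-1)ʲ = sin (N tⱼ)` turns each term into a mean of two Dirichlet-kernel terms
  have split : ∀ j ∈ range (2 * N),
      (-1) ^ j * cos ((m + 1 / 2) * rieszNode N j) / sin (rieszNode N j / 2)
        = (sin ((((N - (m + 1) : ℕ) : ℝ) + 1 / 2) * rieszNode N j) / sin (rieszNode N j / 2)
          + sin (((N + m : ℕ) + 1 / 2) * rieszNode N j) / sin (rieszNode N j / 2)) / 2 := by
    intro j hj
    have product_to_sum : 2 * (-1) ^ j * cos ((m + 1 / 2) * rieszNode N j)
        = sin ((((N - (m + 1) : ℕ) : ℝ) + 1 / 2) * rieszNode N j)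
          + sin (((N + m : ℕ) + 1 / 2) * rieszNode N j) := by
      rw [← sin_mul_rieszNode_self (mem_range.1 hj), two_mul_sin_mul_cos]
      push_cast [Nat.cast_sub (show m + 1 ≤ N by omega)]
      ring_nf
    rw [← add_div, ← product_to_sum]
    ring
  rw [sum_congr rfl split, ← sum_div, sum_add_distrib,
    sum_range_sin_add_half_mul_rieszNode_div (by omega),
    sum_range_sin_add_half_mul_rieszNode_div (by omega)]
  ring

lemma sum_range_neg_one_pow_mul_sin_mul_rieszNode_div_sq {N m : ℕ} (hm : m ≤ N) :
    ∑ j ∈ range (2 * N), (-1) ^ j * sin (m * rieszNode N j) / sin (rieszNode N j / 2) ^ 2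
      = (4 * N * m : ℝ) := by
  induction m with
  | zero => simp
  | succ m ih =>
    push_cast
    have step : ∀ j ∈ range (2 * N),
        (-1) ^ j * sin ((m + 1) * rieszNode N j) / sin (rieszNode N j / 2) ^ 2
          = (-1) ^ j * sin (m * rieszNode N j) / sin (rieszNode N j / 2) ^ 2
            + 2 * ((-1) ^ j * cos ((m + 1 / 2) * rieszNode N j) / sin (rieszNode N j / 2)) := by
      intro j hj
      have hs := (sin_half_rieszNode_pos (mem_range.1 hj)).ne'
      have increment : sin ((m + 1) * rieszNode N j)
          = sin (m * rieszNode N j)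
            + 2 * sin (rieszNode N j / 2) * cos ((m + 1 / 2) * rieszNode N j) := by
        rw [← sub_eq_iff_eq_add', sin_sub_sin]; ring_nf
      rw [increment]
      field_simp
    rw [sum_congr rfl step, sum_add_distrib, ih (by omega), ← mul_sum,
      sum_range_neg_one_pow_mul_cos_add_half_mul_rieszNode_div (by omega)]
    ring

lemma rieszNode_reflect {N j : ℕ} (hj : j < 2 * N) :
    rieszNode N (2 * N - 1 - j) = 2 * π - rieszNode N j := by
  have hN : (N : ℝ) ≠ 0 := (cast_pos_of_lt_two_mul hj).ne'
  rw [rieszNode, rieszNode, Nat.cast_sub (by omega), Nat.cast_sub (by omega)]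
  field_simp
  push_cast; ring

lemma neg_one_pow_two_mul_sub_one_sub {R : Type*} [Ring R] {N j : ℕ} (hj : j < 2 * N) :
    (-1 : R) ^ (2 * N - 1 - j) = -(-1) ^ j := by
  have odd_sum : (-1 : R) ^ (2 * N - 1 - j) * (-1) ^ j = -1 := by
    rw [← pow_add, show 2 * N - 1 - j + j = 2 * (N - 1) + 1 by omega, pow_succ, pow_mul]
    simp
  calc (-1 : R) ^ (2 * N - 1 - j) = (-1) ^ (2 * N - 1 - j) * (-1) ^ j * (-1) ^ j := by
        rw [mul_assoc, ← pow_add, ← two_mul, pow_mul]; simp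
    _ = -(-1) ^ j := by rw [odd_sum, neg_one_mul]

lemma sum_range_neg_one_pow_mul_cos_mul_rieszNode_div_sq (N m : ℕ) :
    ∑ j ∈ range (2 * N), (-1) ^ j * cos (m * rieszNode N j) / sin (rieszNode N j / 2) ^ 2 = 0 := by
  -- the reflection `j ↦ 2N - 1 - j` fixes the cosine and the weight and flips the sign
  have antisymm : ∀ j ∈ range (2 * N),
      (-1) ^ (2 * N - 1 - j) * cos (m * rieszNode N (2 * N - 1 - j))
          / sin (rieszNode N (2 * N - 1 - j) / 2) ^ 2
        = -((-1) ^ j * cos (m * rieszNode N j) / sin (rieszNode N j / 2) ^ 2) := by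
    intro j hj
    have hj := mem_range.1 hj
    rw [neg_one_pow_two_mul_sub_one_sub hj, rieszNode_reflect hj, mul_sub, cos_nat_mul_two_pi_sub,
      sub_div, mul_div_cancel_left₀ _ two_ne_zero, sin_pi_sub]
    ring
  have reflected := sum_range_reflect
    (fun j => (-1 : ℝ) ^ j * cos (m * rieszNode N j) / sin (rieszNode N j / 2) ^ 2) (2 * N)
  rw [sum_congr rfl antisymm, sum_neg_distrib] at reflected
  linarith

lemma sum_range_inv_sin_half_rieszNode_sq (N : ℕ) :
    ∑ j ∈ range (2 * N), (sin (rieszNode N j / 2) ^ 2)⁻¹ = 4 * N ^ 2 := by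
  rw [sq (N : ℝ), ← mul_assoc, ← sum_range_neg_one_pow_mul_sin_mul_rieszNode_div_sq le_rfl]
  refine sum_congr rfl fun j hj => ?_
  rw [sin_mul_rieszNode_self (mem_range.1 hj), ← pow_add, ← two_mul, pow_mul]
  norm_num

-- Spanned by the phase-shifted cosines `cos (k x - φ)` rather than by `cos (k x)`, `sin (k x)`,
-- so that a product of two generators is a sum of two generators.
def trigPoly (N : ℕ) : Submodule ℝ (ℝ → ℝ) :=
  Submodule.span ℝ {f | ∃ k ≤ N, ∃ φ : ℝ, f = fun x => cos (k * x - φ)}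

lemma cos_mem_trigPoly {N k : ℕ} (hk : k ≤ N) (φ : ℝ) : (fun x => cos (k * x - φ)) ∈ trigPoly N :=
  Submodule.subset_span ⟨k, hk, φ, rfl⟩

lemma const_mem_trigPoly (N : ℕ) (c : ℝ) : (fun _ => c) ∈ trigPoly N := by
  convert (trigPoly N).smul_mem c (cos_mem_trigPoly (Nat.zero_le N) 0)
  simp

lemma cos_sub_mem_trigPoly {N k l : ℕ} (hk : k ≤ N) (hl : l ≤ N) (φ : ℝ) :
    (fun x => cos ((k - l) * x - φ)) ∈ trigPoly N := by
  rcases le_total l k with hlk | hkl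
  · simpa [Nat.cast_sub hlk] using cos_mem_trigPoly ((Nat.sub_le k l).trans hk) φ
  · convert cos_mem_trigPoly ((Nat.sub_le l k).trans hl) (-φ) using 2 with x
    rw [Nat.cast_sub hkl, ← cos_neg]; ring_nf

lemma mul_mem_trigPoly {m n : ℕ} {f g : ℝ → ℝ} (hf : f ∈ trigPoly m) (hg : g ∈ trigPoly n) :
    f * g ∈ trigPoly (m + n) := by
  have hfg := Submodule.mul_mem_mul hf hg
  rw [trigPoly, trigPoly, Submodule.span_mul_span] at hfg
  refine Submodule.span_le.2 ?_ hfg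
  rintro _ ⟨_, ⟨k, hk, φ, rfl⟩, _, ⟨l, hl, ψ, rfl⟩, rfl⟩
  have product_to_sum : ((fun x => cos (k * x - φ)) * fun x => cos (l * x - ψ))
      = (1 / 2 : ℝ) • (fun x => cos ((k + l : ℕ) * x - (φ + ψ)))
        + (1 / 2 : ℝ) • (fun x => cos ((k - l) * x - (φ - ψ))) := by
    ext x
    simp only [Pi.mul_apply, Pi.add_apply, Pi.smul_apply, smul_eq_mul]
    rw [show ((k + l : ℕ) : ℝ) * x - (φ + ψ) = (k * x - φ) + (l * x - ψ) by push_cast; ring,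
      show ((k : ℝ) - l) * x - (φ - ψ) = (k * x - φ) - (l * x - ψ) by ring,
      cos_add (k * x - φ), cos_sub (k * x - φ)]
    ring
  show (fun x => cos (k * x - φ)) * (fun x => cos (l * x - ψ)) ∈ trigPoly (m + n)
  rw [product_to_sum]
  exact add_mem (Submodule.smul_mem _ _ (cos_mem_trigPoly (by omega) _))
    (Submodule.smul_mem _ _ (cos_sub_mem_trigPoly (by omega) (by omega) _))

lemma sum_cos_add_sin_mem_trigPoly (d : ℕ) (a b : ℕ → ℝ) :
    (fun θ => ∑ k ∈ range (d + 1), (a k * cos (k * θ) + b k * sin (k * θ))) ∈ trigPoly d := by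
  have hcos : ∀ k ∈ range (d + 1), (fun θ => cos (k * θ)) ∈ trigPoly d := fun k hk => by
    simpa using cos_mem_trigPoly (Nat.lt_succ_iff.1 (mem_range.1 hk)) 0
  have hsin : ∀ k ∈ range (d + 1), (fun θ => sin (k * θ)) ∈ trigPoly d := fun k hk => by
    simpa [cos_sub_pi_div_two] using cos_mem_trigPoly (Nat.lt_succ_iff.1 (mem_range.1 hk)) (π / 2)
  convert (trigPoly d).sum_mem fun k hk =>
    add_mem ((trigPoly d).smul_mem (a k) (hcos k hk)) ((trigPoly d).smul_mem (b k) (hsin k hk))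
  simp

-- For `N = 0` the prefactor is `0⁻¹ = 0` and the sum is empty, matching the derivative `0` of
-- the constants `trigPoly 0`.
noncomputable def rieszSum (N : ℕ) (T : ℝ → ℝ) (x : ℝ) : ℝ :=
  (4 * N : ℝ)⁻¹ *
    ∑ j ∈ range (2 * N), (-1) ^ j * T (x + rieszNode N j) / sin (rieszNode N j / 2) ^ 2

lemma rieszSum_cos {N k : ℕ} (hk : k ≤ N) (φ x : ℝ) :
    rieszSum N (fun x => cos (k * x - φ)) x = -(k * sin (k * x - φ)) := by
  have expand : ∀ j ∈ range (2 * N),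
      (-1) ^ j * cos (k * (x + rieszNode N j) - φ) / sin (rieszNode N j / 2) ^ 2 =
        cos (k * x - φ) * ((-1) ^ j * cos (k * rieszNode N j) / sin (rieszNode N j / 2) ^ 2)
        - sin (k * x - φ) * ((-1) ^ j * sin (k * rieszNode N j) / sin (rieszNode N j / 2) ^ 2) := by
    intro j _
    rw [show k * (x + rieszNode N j) - φ = (k * x - φ) + k * rieszNode N j by ring, cos_add]
    ring
  rw [rieszSum, sum_congr rfl expand, sum_sub_distrib, ← mul_sum, ← mul_sum,
    sum_range_neg_one_pow_mul_cos_mul_rieszNode_div_sq,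
    sum_range_neg_one_pow_mul_sin_mul_rieszNode_div_sq hk]
  rcases Nat.eq_zero_or_pos N with rfl | hN
  · obtain rfl : k = 0 := by omega
    simp
  · field_simp
    ring

lemma rieszSum_add (N : ℕ) (S T : ℝ → ℝ) (x : ℝ) :
    rieszSum N (S + T) x = rieszSum N S x + rieszSum N T x := by
  simp only [rieszSum, Pi.add_apply, mul_add, add_div, sum_add_distrib]

lemma rieszSum_smul (N : ℕ) (c : ℝ) (T : ℝ → ℝ) (x : ℝ) :
    rieszSum N (c • T) x = c * rieszSum N T x := by
  simp only [rieszSum, Pi.smul_apply, smul_eq_mul, mul_sum]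
  congr 1 with j
  ring

lemma hasDerivAt_rieszSum {N : ℕ} {T : ℝ → ℝ} (hT : T ∈ trigPoly N) (x : ℝ) :
    HasDerivAt T (rieszSum N T x) x := by
  induction hT using Submodule.span_induction generalizing x with
  | mem f hf =>
    obtain ⟨k, hk, φ, rfl⟩ := hf
    rw [rieszSum_cos hk]
    exact (((hasDerivAt_id x).const_mul (k : ℝ)).sub_const φ).cos.congr_deriv (by simp; ring)
  | zero => simp [rieszSum]
  | add S T _ _ hS hT => rw [rieszSum_add]; exact (hS x).add (hT x)
  | smul c T _ hT => rw [rieszSum_smul]; exact (hT x).const_mul c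

lemma abs_rieszSum_le {N : ℕ} {T : ℝ → ℝ} {M : ℝ} (hM : ∀ x, |T x| ≤ M) (x : ℝ) :
    |rieszSum N T x| ≤ N * M := by
  have term_le : ∀ j ∈ range (2 * N),
      |(-1) ^ j * T (x + rieszNode N j) / sin (rieszNode N j / 2) ^ 2|
        ≤ M * (sin (rieszNode N j / 2) ^ 2)⁻¹ := by
    intro j _
    rw [abs_div, abs_mul, abs_neg_one_pow, one_mul, abs_pow, sq_abs, div_eq_mul_inv]
    exact mul_le_mul_of_nonneg_right (hM _) (by positivity)
  calc |rieszSum N T x|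
      = (4 * N : ℝ)⁻¹ * |∑ j ∈ range (2 * N),
          (-1) ^ j * T (x + rieszNode N j) / sin (rieszNode N j / 2) ^ 2| := by
        rw [rieszSum, abs_mul, abs_of_nonneg (by positivity)]
    _ ≤ (4 * N : ℝ)⁻¹ * ∑ j ∈ range (2 * N), M * (sin (rieszNode N j / 2) ^ 2)⁻¹ := by
        gcongr
        exact (abs_sum_le_sum_abs _ _).trans (sum_le_sum term_le)
    _ = N * M := by
        rw [← mul_sum, sum_range_inv_sin_half_rieszNode_sq]
        rcases Nat.eq_zero_or_pos N with rfl | hN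
        · simp
        · field_simp

theorem abs_deriv_le_of_mem_trigPoly {N : ℕ} {T : ℝ → ℝ} {M : ℝ} (hT : T ∈ trigPoly N)
    (hM : ∀ x, |T x| ≤ M) (x : ℝ) : |deriv T x| ≤ N * M := by
  rw [(hasDerivAt_rieszSum hT x).deriv]
  exact abs_rieszSum_le hM x

/-- If `g` is a trigonometric polynomial of degree at most `d` with `|g| ≤ 1`,
then `f = g²` satisfies `|f'| ≤ d`. -/
theorem stmt3 (d : ℕ) (a b : ℕ → ℝ) (g : ℝ → ℝ)
    (hg : ∀ θ : ℝ, g θ = ∑ k ∈ Finset.range (d + 1),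
      (a k * Real.cos (k * θ) + b k * Real.sin (k * θ)))
    (hbd : ∀ θ : ℝ, |g θ| ≤ 1) :
    ∀ θ : ℝ, |deriv (fun θ => (g θ)^2) θ| ≤ d := by
  intro θ
  have hg_mem : g ∈ trigPoly d := funext hg ▸ sum_cos_add_sin_mem_trigPoly d a b
  have hf_mem : (fun θ => g θ ^ 2 - 1 / 2) ∈ trigPoly (2 * d) := by
    rw [two_mul]
    convert sub_mem (mul_mem_trigPoly hg_mem hg_mem) (const_mem_trigPoly (d + d) (1 / 2)) using 1
    funext x
    simp [sq]
  have hf_bound : ∀ x, |g x ^ 2 - 1 / 2| ≤ 1 / 2 := by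
    intro x
    have := sq_le_one_iff_abs_le_one (g x) |>.2 (hbd x)
    rw [abs_le]
    constructor <;> nlinarith [sq_nonneg (g x)]
  calc |deriv (fun θ => g θ ^ 2) θ| = |deriv (fun θ => g θ ^ 2 - 1 / 2) θ| := by
        rw [deriv_sub_const]
    _ ≤ (2 * d : ℕ) * (1 / 2) := abs_deriv_le_of_mem_trigPoly hf_mem hf_bound θ
    _ = d := by push_cast; ring
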